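/- Let p satisfy (P). Fix a > 0 and u = (ρ,q) ∈ A₀, set v = q/ρ and c² = p'(ρ). Let Σ = (0, Σ₂) be C¹ near (a,a,u) with Σ(α,α;w) = 0 for all α,w, and suppose T(Δa) = (ρ_T(Δa), q_T(Δa)) is differentiable at Δa = 0 with T(0) = u and satisfies, for all Δa near 0, the junction relations (a+Δa) q_T(Δa) − a q = 0 and (a+Δa) P(T(Δa)) − a P(u) − Σ₂(a, a+Δa; u) = 0. Then q_T'(0) = −q/a and ρ_T'(0) = Hρ/a, where H = (v² + (∂_{a⁺}Σ₂(a,a;u) − p(ρ))/ρ)/(c² − v²); that is, to first order T(a, a+Δa; u) = ((1 + H·Δa/a)ρ, (1 − Δa/a)q) + o(Δa). -/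

import Mathlib

/-!
Differentiate both junction relations at `Δa = 0`. The mass relation gives
`q + a q_T'(0) = 0`. In the momentum relation the derivative of `P(T(Δa))` is
`2 v q_T'(0) + (c² - v²) ρ_T'(0)`, so the relation becomes linear in `ρ_T'(0)`, with
coefficient `a (c² - v²)`, which is nonzero precisely because `u` is subsonic.
-/

noncomputable section

open Filter

def soundSpeed (p : ℝ → ℝ) (ρ : ℝ) : ℝ := Real.sqrt (deriv p ρ)

def lam1 (p : ℝ → ℝ) (u : ℝ × ℝ) : ℝ := u.2 / u.1 - soundSpeed p u.1
def lam2 (p : ℝ → ℝ) (u : ℝ × ℝ) : ℝ := u.2 / u.1 + soundSpeed p u.1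

def Pflux (p : ℝ → ℝ) (u : ℝ × ℝ) : ℝ := u.2 ^ 2 / u.1 + p u.1

def subsonicA0 (p : ℝ → ℝ) : Set (ℝ × ℝ) :=
  {u | 0 < u.1 ∧ lam1 p u < 0 ∧ 0 < lam2 p u}

theorem HasDerivAt.eq_zero_of_eventually_eq_const {f : ℝ → ℝ} {f' x c : ℝ}
    (hf : HasDerivAt f f' x) (h : ∀ᶠ y in nhds x, f y = c) : f' = 0 :=
  hf.unique ((hasDerivAt_const x c).congr_of_eventuallyEq h)

theorem abs_lt_soundSpeed_of_mem_subsonicA0 {p : ℝ → ℝ} {u : ℝ × ℝ}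
    (hu : u ∈ subsonicA0 p) : |u.2 / u.1| < soundSpeed p u.1 := by
  obtain ⟨-, h₁, h₂⟩ := hu
  rw [lam1, sub_neg] at h₁
  rw [lam2] at h₂
  exact abs_lt.mpr ⟨by linarith, h₁⟩

theorem sq_lt_deriv_of_mem_subsonicA0 {p : ℝ → ℝ} {u : ℝ × ℝ}
    (hu : u ∈ subsonicA0 p) : (u.2 / u.1) ^ 2 < deriv p u.1 := by
  have hv := abs_lt_soundSpeed_of_mem_subsonicA0 hu
  have hc : 0 < deriv p u.1 := Real.sqrt_pos.mp ((abs_nonneg _).trans_lt hv)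
  calc (u.2 / u.1) ^ 2 = |u.2 / u.1| ^ 2 := (sq_abs _).symm
    _ < soundSpeed p u.1 ^ 2 := pow_lt_pow_left₀ hv (abs_nonneg _) two_ne_zero
    _ = deriv p u.1 := Real.sq_sqrt hc.le

theorem hasDerivAt_Pflux_comp {p : ℝ → ℝ} {γ : ℝ → ℝ × ℝ} {ρ' q' c2 t : ℝ}
    (hρ : HasDerivAt (fun s => (γ s).1) ρ' t) (hq : HasDerivAt (fun s => (γ s).2) q' t)
    (hp : HasDerivAt p c2 (γ t).1) (hρ0 : (γ t).1 ≠ 0) :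
    HasDerivAt (fun s => Pflux p (γ s))
      (2 * ((γ t).2 / (γ t).1) * q' + (c2 - ((γ t).2 / (γ t).1) ^ 2) * ρ') t := by
  refine (((hq.fun_pow 2).div hρ hρ0).add (hp.comp t hρ)).congr_deriv ?_
  field_simp
  ring

theorem ContDiffAt.hasDerivAt_middle_slice {E : Type*} [NormedAddCommGroup E]
    [NormedSpace ℝ E] {f : ℝ → ℝ → E → ℝ} {a b : ℝ} {w : E}
    (hf : ContDiffAt ℝ 1 (fun x : ℝ × ℝ × E => f x.1 x.2.1 x.2.2) (a, b, w)) :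
    HasDerivAt (fun s => f a s w) (deriv (fun s => f a s w) b) b :=
  (DifferentiableAt.comp (f := fun s : ℝ => ((a, s, w) : ℝ × ℝ × E)) b
    (hf.differentiableAt one_ne_zero) (by fun_prop)).hasDerivAt

theorem junction_map_first_order_expansion_general
    (p : ℝ → ℝ)
    (hp_reg : ContDiffOn ℝ 2 p (Set.Ioi 0))
    (a : ℝ) (ha : 0 < a)
    (u : ℝ × ℝ) (hu : u ∈ subsonicA0 p)
    (Sgm2 : ℝ → ℝ → (ℝ × ℝ) → ℝ)
    -- Σ = (0, Σ₂) is C¹ near (a,a,u)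
    (hSgm0 : ContDiffAt ℝ 1 (fun x : ℝ × ℝ × (ℝ × ℝ) => Sgm2 x.1 x.2.1 x.2.2)
      (a, a, u))
    (T : ℝ → ℝ × ℝ)
    (hTdiff : DifferentiableAt ℝ T 0)
    (hT0 : T 0 = u)
    -- the junction relations hold for all Δa near 0
    (hT1 : ∀ᶠ Δa : ℝ in nhds 0, (a + Δa) * (T Δa).2 - a * u.2 = 0)
    (hT2 : ∀ᶠ Δa : ℝ in nhds 0,
      (a + Δa) * Pflux p (T Δa) - a * Pflux p u - Sgm2 a (a + Δa) u = 0) :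
    HasDerivAt (fun Δa => (T Δa).2) (-(u.2 / a)) 0 ∧
    HasDerivAt (fun Δa => (T Δa).1)
      (((u.2 / u.1) ^ 2
          + (deriv (fun s => Sgm2 a s u) a - p u.1) / u.1)
        / (deriv p u.1 - (u.2 / u.1) ^ 2) * u.1 / a) 0 := by
  have hρ0 : u.1 ≠ 0 := hu.1.ne'
  have hshift : HasDerivAt (fun Δa : ℝ => a + Δa) 1 0 := (hasDerivAt_id 0).const_add a
  obtain ⟨ρ', hρ'⟩ : ∃ r, HasDerivAt (fun Δa => (T Δa).1) r 0 :=
    ⟨_, hTdiff.fst.hasDerivAt⟩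
  obtain ⟨q', hq'⟩ : ∃ r, HasDerivAt (fun Δa => (T Δa).2) r 0 :=
    ⟨_, hTdiff.snd.hasDerivAt⟩
  have hmass := ((hshift.mul hq').sub_const (a * u.2)).eq_zero_of_eventually_eq_const hT1
  rw [hT0] at hmass
  obtain rfl : q' = -(u.2 / a) := by
    field_simp
    linarith
  refine ⟨hq', hρ'.congr_deriv ?_⟩
  have hp : HasDerivAt p (deriv p u.1) u.1 :=
    ((hp_reg.contDiffAt (Ioi_mem_nhds hu.1)).differentiableAt (by norm_num)).hasDerivAt
  have hSgm := HasDerivAt.comp_const_add a 0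
    (by rw [add_zero]; exact hSgm0.hasDerivAt_middle_slice)
  have hflux := hasDerivAt_Pflux_comp hρ' hq' (hT0 ▸ hp) (hT0 ▸ hρ0)
  have hmomentum := (((hshift.mul hflux).sub_const (a * Pflux p u)).sub
    hSgm).eq_zero_of_eventually_eq_const hT2
  rw [hT0, Pflux] at hmomentum
  have hdet : 0 < u.1 ^ 2 * deriv p u.1 - u.2 ^ 2 := by
    have hsub := sq_lt_deriv_of_mem_subsonicA0 hu
    rw [div_pow, div_lt_iff₀ (pow_pos hu.1 2)] at hsub
    linarith
  field_simp at hmomentum ⊢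
  apply mul_left_cancel₀ ha.ne'
  linear_combination hmomentum

theorem junction_map_first_order_expansion
    (p : ℝ → ℝ)
    (hp_reg : ContDiffOn ℝ 2 p (Set.Ioi 0))
    (hp_pos : ∀ ρ > (0:ℝ), p ρ > 0)
    (hp' : ∀ ρ > (0:ℝ), deriv p ρ > 0)
    (hp'' : ∀ ρ > (0:ℝ), deriv (deriv p) ρ ≥ 0)
    (a : ℝ) (ha : 0 < a)
    (u : ℝ × ℝ) (hu : u ∈ subsonicA0 p)
    (Sgm2 : ℝ → ℝ → (ℝ × ℝ) → ℝ)
    -- Σ = (0, Σ₂) is C¹ near (a,a,u)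
    (hSgm0 : ContDiffAt ℝ 1 (fun x : ℝ × ℝ × (ℝ × ℝ) => Sgm2 x.1 x.2.1 x.2.2)
      (a, a, u))
    -- Σ(α,α;w) = 0 for all α,w near (a,u)
    (hSgm1 : ∀ᶠ x : ℝ × (ℝ × ℝ) in nhds (a, u), Sgm2 x.1 x.1 x.2 = 0)
    (T : ℝ → ℝ × ℝ)
    (hTdiff : DifferentiableAt ℝ T 0)
    (hT0 : T 0 = u)
    -- the junction relations hold for all Δa near 0
    (hT1 : ∀ᶠ Δa : ℝ in nhds 0, (a + Δa) * (T Δa).2 - a * u.2 = 0)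
    (hT2 : ∀ᶠ Δa : ℝ in nhds 0,
      (a + Δa) * Pflux p (T Δa) - a * Pflux p u - Sgm2 a (a + Δa) u = 0) :
    HasDerivAt (fun Δa => (T Δa).2) (-(u.2 / a)) 0 ∧
    HasDerivAt (fun Δa => (T Δa).1)
      (((u.2 / u.1) ^ 2
          + (deriv (fun s => Sgm2 a s u) a - p u.1) / u.1)
        / (deriv p u.1 - (u.2 / u.1) ^ 2) * u.1 / a) 0 :=
  junction_map_first_order_expansion_general p hp_reg a ha u hu Sgm2 hSgm0 T hTdiff hT0 hT1 hT2

end
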